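/- For positive integers g and ℓ, let n'_{g,ℓ} denote the number of gapsets of genus g all of whose Kunz coordinates lie in [ℓ, 2ℓ+1]. Then n'_{g,ℓ} ≤ Σ_{i=ℓ}^{2ℓ+1} n'_{g−i,ℓ}. -/

import Mathlib

def IsGapset (G : Finset ℕ) : Prop :=
  0 ∉ G ∧ ∀ z ∈ G, ∀ x y : ℕ, 0 < x → 0 < y → x + y = z → x ∈ G ∨ y ∈ G

def IsNumSgp (S : Set ℕ) : Prop :=
  0 ∈ S ∧ (∀ a ∈ S, ∀ b ∈ S, a + b ∈ S) ∧ Sᶜ.Finite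

noncomputable def mult (G : Finset ℕ) : ℕ := sInf {s : ℕ | 0 < s ∧ s ∉ G}

noncomputable def kunz (G : Finset ℕ) (i : ℕ) : ℕ := (G.filter (fun z => z % mult G = i)).card

noncomputable def gapConductor (G : Finset ℕ) : ℕ := sInf {s : ℕ | 0 < s ∧ ∀ n : ℕ, s + n ∉ G}

noncomputable def gapDepth (G : Finset ℕ) : ℕ := (gapConductor G + mult G - 1) / mult G

def KunzIneq (m : ℕ) (k : ℕ → ℕ) : Prop :=
  (∀ i j : ℕ, 1 ≤ i → i ≤ j → j ≤ m - 1 → i + j < m → k (i + j) ≤ k i + k j) ∧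
  (∀ i j : ℕ, 1 ≤ i → i ≤ j → j ≤ m - 1 → m < i + j → k (i + j - m) ≤ k i + k j + 1)

def Gamma' (g l : ℕ) : Set (Finset ℕ) :=
  {G : Finset ℕ | IsGapset G ∧ G.card = g ∧
    ∀ i : ℕ, 1 ≤ i → i < mult G → kunz G i ∈ Set.Icc l (2 * l + 1)}

noncomputable def n' (g : ℤ) (l : ℕ) : ℕ := if g < 0 then 0 else (Gamma' g.toNat l).ncard

/-
Removing the last Kunz coordinate of a gapset of multiplicity `m ≥ 2` gives the gapset of
multiplicity `m - 1` with Kunz coordinates `k₁, …, k_{m-2}`: the inequalities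
`k_{i+j} ≤ k_i + k_j` are inherited, and the wrap-around ones `k_{i+j-m+1} ≤ k_i + k_j + 1` hold
automatically because all coordinates lie in `[ℓ, 2ℓ+1]`. As the genus is the sum of the Kunz
coordinates, this maps the gapsets of `Γ'(g, ℓ)` whose last coordinate is `i` injectively into
`Γ'(g - i, ℓ)`.
-/

lemma mult_mem_setOf (G : Finset ℕ) : mult G ∈ {s : ℕ | 0 < s ∧ s ∉ G} :=
  Nat.sInf_mem ⟨G.sup id + 1, Nat.succ_pos _,
    fun h => (Finset.le_sup (f := id) h).not_gt (Nat.lt_succ_self _)⟩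

lemma mult_pos (G : Finset ℕ) : 0 < mult G := (mult_mem_setOf G).1

lemma mult_notMem (G : Finset ℕ) : mult G ∉ G := (mult_mem_setOf G).2

lemma mem_of_pos_of_lt_mult {G : Finset ℕ} {x : ℕ} (hx : 0 < x) (hxm : x < mult G) :
    x ∈ G := by
  by_contra h
  exact absurd hxm (not_lt.2 (Nat.sInf_le ⟨hx, h⟩))

lemma mult_eq_of_forall_mem {G : Finset ℕ} {m : ℕ} (hm : 0 < m) (hmG : m ∉ G)
    (h : ∀ x, 0 < x → x < m → x ∈ G) : mult G = m :=
  le_antisymm (Nat.sInf_le ⟨hm, hmG⟩) (not_lt.1 fun hlt => mult_notMem G (h _ (mult_pos G) hlt))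

lemma kunz_pos {G : Finset ℕ} {r : ℕ} (hr : 0 < r) (hrm : r < mult G) : 0 < kunz G r :=
  Finset.card_pos.2
    ⟨r, Finset.mem_filter.2 ⟨mem_of_pos_of_lt_mult hr hrm, Nat.mod_eq_of_lt hrm⟩⟩

lemma kunz_le_card (G : Finset ℕ) (r : ℕ) : kunz G r ≤ G.card :=
  Finset.card_le_card (Finset.filter_subset _ _)

lemma mult_le_card_add_one (G : Finset ℕ) : mult G ≤ G.card + 1 := by
  have hsub : Finset.Ico 1 (mult G) ⊆ G := fun x hx =>
    mem_of_pos_of_lt_mult (Finset.mem_Ico.1 hx).1 (Finset.mem_Ico.1 hx).2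
  have := Finset.card_le_card hsub
  rw [Nat.card_Ico] at this
  omega

def ofKunz (μ : ℕ) (c : ℕ → ℕ) : Finset ℕ :=
  (Finset.range ((Finset.range μ).sup c * μ)).filter fun z => z % μ ≠ 0 ∧ z / μ < c (z % μ)

section ofKunz

variable {μ : ℕ} {c : ℕ → ℕ}

lemma mem_ofKunz (hμ : 0 < μ) {z : ℕ} :
    z ∈ ofKunz μ c ↔ z % μ ≠ 0 ∧ z / μ < c (z % μ) := by
  refine Finset.mem_filter.trans ⟨And.right, fun h => ⟨?_, h⟩⟩
  rw [Finset.mem_range, ← Nat.div_lt_iff_lt_mul hμ]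
  exact h.2.trans_le (Finset.le_sup (Finset.mem_range.2 (Nat.mod_lt z hμ)))

lemma mem_ofKunz_add_mul (hμ : 0 < μ) {r t : ℕ} (hr0 : 0 < r) (hr : r < μ) :
    r + μ * t ∈ ofKunz μ c ↔ t < c r := by
  obtain ⟨hdiv, hmod⟩ := (Nat.div_mod_unique hμ).2 ⟨rfl, hr⟩
  rw [mem_ofKunz hμ, hdiv, hmod]
  simp [hr0.ne']

lemma ofKunz_congr {c' : ℕ → ℕ} (hμ : 0 < μ) (h : ∀ r, 0 < r → r < μ → c r = c' r) :
    ofKunz μ c = ofKunz μ c' := by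
  ext z
  rw [mem_ofKunz hμ, mem_ofKunz hμ]
  exact and_congr_right fun hz => by rw [h _ (Nat.pos_of_ne_zero hz) (Nat.mod_lt z hμ)]

lemma mult_ofKunz (hμ : 0 < μ) (hc : ∀ r, 0 < r → r < μ → 0 < c r) :
    mult (ofKunz μ c) = μ := by
  refine mult_eq_of_forall_mem hμ (by simp [mem_ofKunz hμ]) fun x hx hxμ => ?_
  simpa using (mem_ofKunz_add_mul hμ hx hxμ (t := 0)).2 (hc x hx hxμ)

lemma KunzIneq.le_add (h : KunzIneq μ c) {i j : ℕ} (hi : 0 < i) (hj : 0 < j) (hij : i + j < μ) :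
    c (i + j) ≤ c i + c j := by
  rcases le_total i j with hle | hle
  · exact h.1 i j hi hle (by omega) hij
  · rw [add_comm i, add_comm (c i)]
    exact h.1 j i hj hle (by omega) (by omega)

lemma KunzIneq.le_add_add_one (h : KunzIneq μ c) {i j : ℕ} (hi : 0 < i) (hj : 0 < j)
    (hiμ : i < μ) (hjμ : j < μ) (hij : μ < i + j) : c (i + j - μ) ≤ c i + c j + 1 := by
  rcases le_total i j with hle | hle
  · exact h.2 i j hi hle (by omega) hij
  · rw [add_comm i, add_comm (c i)]
    exact h.2 j i hj hle (by omega) (by omega)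

lemma KunzIneq.isGapset_ofKunz (hμ : 0 < μ) (h : KunzIneq μ c) : IsGapset (ofKunz μ c) := by
  refine ⟨fun h0 => ((mem_ofKunz hμ).1 h0).1 (Nat.zero_mod μ), ?_⟩
  rintro _ hz x y hx hy rfl
  by_contra! hxy
  rw [mem_ofKunz hμ, mem_ofKunz hμ] at hxy
  obtain ⟨hxG, hyG⟩ := hxy
  rw [mem_ofKunz hμ, Nat.add_mod] at hz
  have hdiv := Nat.add_div (a := x) (b := y) hμ
  have hxμ := Nat.mod_lt x hμ
  have hyμ := Nat.mod_lt y hμ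
  -- `omega` treats `x / μ` as an atom of unknown sign
  have hx' := Nat.zero_le (x / μ)
  have hy' := Nat.zero_le (y / μ)
  rcases Nat.eq_zero_or_pos (x % μ) with hx0 | hx0
  · rw [hx0, zero_add, Nat.mod_mod] at hz
    split_ifs at hdiv <;> omega
  rcases Nat.eq_zero_or_pos (y % μ) with hy0 | hy0
  · rw [hy0, add_zero, Nat.mod_mod] at hz
    split_ifs at hdiv <;> omega
  rcases lt_trichotomy (x % μ + y % μ) μ with hlt | heq | hgt
  · rw [Nat.mod_eq_of_lt hlt] at hz
    have := h.le_add hx0 hy0 hlt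
    split_ifs at hdiv <;> omega
  · rw [heq, Nat.mod_self] at hz
    exact hz.1 rfl
  · rw [Nat.mod_eq_sub_mod hgt.le, Nat.mod_eq_of_lt (by omega)] at hz
    have := h.le_add_add_one hx0 hy0 hxμ hyμ hgt
    split_ifs at hdiv <;> omega

end ofKunz

namespace IsGapset

variable {G : Finset ℕ}

lemma sub_mult_mem (hG : IsGapset G) {z : ℕ} (hz : z ∈ G) (hmz : mult G ≤ z) :
    z - mult G ∈ G := by
  have hne : z ≠ mult G := fun h => mult_notMem G (h ▸ hz)
  exact (hG.2 z hz (mult G) (z - mult G) (mult_pos G) (by omega) (by omega)).resolve_left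
    (mult_notMem G)

lemma sub_mul_mult_mem (hG : IsGapset G) {z : ℕ} (hz : z ∈ G) {t : ℕ}
    (ht : mult G * t ≤ z) : z - mult G * t ∈ G := by
  induction t with
  | zero => simpa using hz
  | succ t ih =>
    rw [Nat.mul_succ] at ht ⊢
    rw [← Nat.sub_sub]
    exact hG.sub_mult_mem (ih (by omega)) (by omega)

lemma mem_of_le_of_modEq (hG : IsGapset G) {w z : ℕ} (hw : w ∈ G) (hzw : z ≤ w)
    (hmod : z ≡ w [MOD mult G]) : z ∈ G := by
  obtain ⟨t, ht⟩ := (Nat.modEq_iff_dvd' hzw).1 hmod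
  have := hG.sub_mul_mult_mem hw (t := t) (by omega)
  rwa [← ht, Nat.sub_sub_self hzw] at this

lemma notMem_of_mult_dvd (hG : IsGapset G) {z : ℕ} (hz : mult G ∣ z) : z ∉ G := fun h =>
  hG.1 (hG.mem_of_le_of_modEq h (Nat.zero_le z) (Nat.modEq_zero_iff_dvd.2 hz).symm)

lemma lt_kunz_of_mem (hG : IsGapset G) {z : ℕ} (hz : z ∈ G) :
    z / mult G < kunz G (z % mult G) := by
  have hle : ∀ t ∈ Finset.range (z / mult G + 1), mult G * t ≤ z := fun t ht =>
    (Nat.mul_le_mul_left _ (Nat.lt_succ_iff.1 (Finset.mem_range.1 ht))).trans (Nat.mul_div_le z _)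
  have hmaps : Set.MapsTo (fun t => z - mult G * t) (Finset.range (z / mult G + 1))
      (G.filter fun w => w % mult G = z % mult G) := fun t ht =>
    Finset.mem_filter.2 ⟨hG.sub_mul_mult_mem hz (hle t ht), Nat.sub_mul_mod (hle t ht)⟩
  have hinj : Set.InjOn (fun t => z - mult G * t) (Finset.range (z / mult G + 1)) := by
    intro a ha b hb hab
    have := hle a ha
    have := hle b hb
    exact Nat.eq_of_mul_eq_mul_left (mult_pos G) (by simp only at hab; omega)
  have := Finset.card_le_card_of_injOn _ hmaps hinj
  rwa [Finset.card_range] at this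

lemma kunz_le_of_notMem (hG : IsGapset G) {z : ℕ} (hz : z ∉ G) :
    kunz G (z % mult G) ≤ z / mult G := by
  have hmaps : Set.MapsTo (· / mult G) (G.filter fun w => w % mult G = z % mult G)
      (Finset.range (z / mult G)) := by
    intro w hw
    obtain ⟨hwG, hwz⟩ := Finset.mem_filter.1 hw
    have hlt : w < z := not_le.1 fun hzw => hz (hG.mem_of_le_of_modEq hwG hzw hwz.symm)
    have := Nat.div_add_mod w (mult G)
    have := Nat.div_add_mod z (mult G)
    simp only [Finset.coe_range, Set.mem_Iio]
    exact Nat.lt_of_mul_lt_mul_left (a := mult G) (by omega)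
  have hinj : Set.InjOn (· / mult G) (G.filter fun w => w % mult G = z % mult G) := by
    intro a ha b hb hab
    simp only [Finset.coe_filter, Set.mem_ofPred_eq] at ha hb hab
    rw [← Nat.div_add_mod a (mult G), ← Nat.div_add_mod b (mult G), hab, ha.2, hb.2]
  have := Finset.card_le_card_of_injOn _ hmaps hinj
  rwa [Finset.card_range] at this

lemma eq_ofKunz (hG : IsGapset G) : G = ofKunz (mult G) (kunz G) := by
  ext z
  rw [mem_ofKunz (mult_pos G)]
  refine ⟨fun hz => ⟨fun h => hG.notMem_of_mult_dvd (Nat.dvd_of_mod_eq_zero h) hz,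
    hG.lt_kunz_of_mem hz⟩, fun h => ?_⟩
  by_contra hz
  exact absurd h.2 (not_lt.2 (hG.kunz_le_of_notMem hz))

lemma mem_add_mul_iff (hG : IsGapset G) {r t : ℕ} (hr0 : 0 < r) (hr : r < mult G) :
    r + mult G * t ∈ G ↔ t < kunz G r := by
  calc r + mult G * t ∈ G ↔ r + mult G * t ∈ ofKunz (mult G) (kunz G) := by
        rw [← hG.eq_ofKunz]
    _ ↔ t < kunz G r := mem_ofKunz_add_mul (mult_pos G) hr0 hr

lemma card_eq_sum_kunz (hG : IsGapset G) : G.card = ∑ r ∈ Finset.Ico 1 (mult G), kunz G r :=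
  Finset.card_eq_sum_card_fiberwise fun z hz => Finset.mem_Ico.2
    ⟨Nat.pos_of_ne_zero fun h => hG.notMem_of_mult_dvd (Nat.dvd_of_mod_eq_zero h) hz,
      Nat.mod_lt z (mult_pos G)⟩

lemma kunz_add_le (hG : IsGapset G) {i j : ℕ} (hi : 0 < i) (hj : 0 < j) (hij : i + j < mult G) :
    kunz G (i + j) ≤ kunz G i + kunz G j := by
  by_contra! h
  have hz := (hG.mem_add_mul_iff (by omega) hij).2 h
  obtain hx | hy := hG.2 _ hz (i + mult G * kunz G i) (j + mult G * kunz G j) (by omega) (by omega)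
    (by ring)
  · exact lt_irrefl _ ((hG.mem_add_mul_iff hi (by omega)).1 hx)
  · exact lt_irrefl _ ((hG.mem_add_mul_iff hj (by omega)).1 hy)

lemma lt_card_mul_card_add_one (hG : IsGapset G) {z : ℕ} (hz : z ∈ G) :
    z < G.card * (G.card + 1) :=
  ((Nat.div_lt_iff_lt_mul (mult_pos G)).1 (hG.lt_kunz_of_mem hz)).trans_le
    (Nat.mul_le_mul (kunz_le_card G _) (mult_le_card_add_one G))

lemma one_lt_mult (hG : IsGapset G) (hne : G.Nonempty) : 1 < mult G := by
  obtain ⟨z, hz⟩ := hne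
  have : mult G ≠ 1 := fun h => hG.notMem_of_mult_dvd (h ▸ one_dvd z) hz
  have := mult_pos G
  omega

end IsGapset

lemma kunz_ofKunz {μ : ℕ} {c : ℕ → ℕ} (hμ : 0 < μ)
    (hc : ∀ r, 0 < r → r < μ → 0 < c r) (h : KunzIneq μ c) {r : ℕ} (hr0 : 0 < r)
    (hr : r < μ) : kunz (ofKunz μ c) r = c r := by
  have hmult := mult_ofKunz hμ hc
  refine eq_of_forall_lt_iff fun t => ?_
  have := (h.isGapset_ofKunz hμ).mem_add_mul_iff hr0 (hr.trans_eq hmult.symm) (t := t)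
  rw [hmult, mem_ofKunz_add_mul hμ hr0 hr] at this
  exact this.symm

lemma finite_setOf_isGapset_card_eq (g : ℕ) :
    {G : Finset ℕ | IsGapset G ∧ G.card = g}.Finite :=
  (Finset.range (g * (g + 1))).powerset.finite_toSet.subset fun _ ⟨hG, hcard⟩ =>
    Finset.mem_powerset.2 fun _ hz => Finset.mem_range.2 (hcard ▸ hG.lt_card_mul_card_add_one hz)

lemma Gamma'_finite (g l : ℕ) : (Gamma' g l).Finite :=
  (finite_setOf_isGapset_card_eq g).subset fun _ hG => ⟨hG.1, hG.2.1⟩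

lemma n'_natCast (g l : ℕ) : n' g l = (Gamma' g l).ncard := by
  simp [n']

noncomputable def lastKunz (G : Finset ℕ) : ℕ := kunz G (mult G - 1)

noncomputable def dropLastKunz (G : Finset ℕ) : Finset ℕ := ofKunz (mult G - 1) (kunz G)

section Gamma'

variable {g l : ℕ} {G : Finset ℕ}

lemma one_lt_mult_of_mem_Gamma' (hg : 0 < g) (hG : G ∈ Gamma' g l) : 1 < mult G :=
  hG.1.one_lt_mult (Finset.card_pos.1 (hG.2.1 ▸ hg))

lemma lastKunz_mem_Icc (hg : 0 < g) (hG : G ∈ Gamma' g l) :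
    lastKunz G ∈ Finset.Icc l (2 * l + 1) := by
  have := one_lt_mult_of_mem_Gamma' hg hG
  exact Finset.mem_Icc.2 (hG.2.2 _ (by omega) (by omega))

lemma lastKunz_le (hG : G ∈ Gamma' g l) : lastKunz G ≤ g := hG.2.1 ▸ kunz_le_card G _

lemma kunzIneq_of_mem_Gamma' (hG : G ∈ Gamma' g l) : KunzIneq (mult G - 1) (kunz G) := by
  refine ⟨fun i j hi _ hj hij => hG.1.kunz_add_le (by omega) (by omega) (by omega),
    fun i j hi hij hj hlt => ?_⟩
  have h₁ := hG.2.2 (i + j - (mult G - 1)) (by omega) (by omega)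
  have h₂ := hG.2.2 i hi (by omega)
  have h₃ := hG.2.2 j (by omega) (by omega)
  simp only [Set.mem_Icc] at h₁ h₂ h₃
  omega

lemma mult_dropLastKunz (hg : 0 < g) (hG : G ∈ Gamma' g l) :
    mult (dropLastKunz G) = mult G - 1 := by
  have := one_lt_mult_of_mem_Gamma' hg hG
  exact mult_ofKunz (by omega) fun r hr hrm => kunz_pos hr (by omega)

lemma kunz_dropLastKunz (hg : 0 < g) (hG : G ∈ Gamma' g l) {r : ℕ} (hr0 : 0 < r)
    (hr : r < mult G - 1) : kunz (dropLastKunz G) r = kunz G r := by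
  have := one_lt_mult_of_mem_Gamma' hg hG
  exact kunz_ofKunz (by omega) (fun r hr hrm => kunz_pos hr (by omega))
    (kunzIneq_of_mem_Gamma' hG) hr0 hr

lemma dropLastKunz_mem_Gamma' (hg : 0 < g) (hG : G ∈ Gamma' g l) :
    dropLastKunz G ∈ Gamma' (g - lastKunz G) l := by
  have hm := one_lt_mult_of_mem_Gamma' hg hG
  have hH : IsGapset (dropLastKunz G) := (kunzIneq_of_mem_Gamma' hG).isGapset_ofKunz (by omega)
  refine ⟨hH, ?_, fun i hi him => ?_⟩
  · have hsplit := Finset.sum_Ico_succ_top (show 1 ≤ mult G - 1 by omega) (kunz G)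
    rw [Nat.sub_add_cancel hm.le, ← hG.1.card_eq_sum_kunz, hG.2.1] at hsplit
    rw [hH.card_eq_sum_kunz, mult_dropLastKunz hg hG, lastKunz, hsplit, Nat.add_sub_cancel]
    exact Finset.sum_congr rfl fun r hr =>
      kunz_dropLastKunz hg hG (Finset.mem_Ico.1 hr).1 (Finset.mem_Ico.1 hr).2
  · rw [mult_dropLastKunz hg hG] at him
    rw [kunz_dropLastKunz hg hG hi him]
    exact hG.2.2 i hi (by omega)

lemma eq_of_dropLastKunz_eq {G₁ G₂ : Finset ℕ} (hg : 0 < g) (hG₁ : G₁ ∈ Gamma' g l)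
    (hG₂ : G₂ ∈ Gamma' g l) (hlast : lastKunz G₁ = lastKunz G₂)
    (hdrop : dropLastKunz G₁ = dropLastKunz G₂) : G₁ = G₂ := by
  have hm₁ := one_lt_mult_of_mem_Gamma' hg hG₁
  have hm₂ := one_lt_mult_of_mem_Gamma' hg hG₂
  have hm : mult G₁ = mult G₂ := by
    have := congrArg mult hdrop
    rw [mult_dropLastKunz hg hG₁, mult_dropLastKunz hg hG₂] at this
    omega
  rw [hG₁.1.eq_ofKunz, hG₂.1.eq_ofKunz, hm]
  refine ofKunz_congr (mult_pos G₂) fun r hr0 hr => ?_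
  rcases Nat.lt_or_ge r (mult G₂ - 1) with h | h
  · rw [← kunz_dropLastKunz hg hG₁ hr0 (by omega), hdrop, kunz_dropLastKunz hg hG₂ hr0 h]
  · obtain rfl : r = mult G₂ - 1 := by omega
    rwa [lastKunz, lastKunz, hm] at hlast

lemma ncard_lastKunz_fiber_le (hg : 0 < g) (i : ℕ) :
    {G ∈ Gamma' g l | lastKunz G = i}.ncard ≤ n' ((g : ℤ) - i) l := by
  obtain h | ⟨G, ⟨hG, rfl⟩⟩ := Set.eq_empty_or_nonempty {G ∈ Gamma' g l | lastKunz G = i}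
  · simp [h]
  rw [← Nat.cast_sub (lastKunz_le hG), n'_natCast]
  refine Set.ncard_le_ncard_of_injOn dropLastKunz (fun H hH => ?_)
    (fun H₁ h₁ H₂ h₂ => eq_of_dropLastKunz_eq hg h₁.1 h₂.1 (h₁.2.trans h₂.2.symm))
    (Gamma'_finite _ _)
  rw [← hH.2]
  exact dropLastKunz_mem_Gamma' hg hH.1

end Gamma'

theorem n'_upper_bound_general (g l : ℕ) (hg : 0 < g) :
    n' (g : ℤ) l ≤ ∑ i ∈ Finset.Icc l (2 * l + 1), n' ((g : ℤ) - (i : ℤ)) l := by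
  set fiber : ℕ → Set (Finset ℕ) := fun i => {G ∈ Gamma' g l | lastKunz G = i}
  have hcover : Gamma' g l ⊆ ⋃ i ∈ Finset.Icc l (2 * l + 1), fiber i :=
    fun G hG => Set.mem_biUnion (lastKunz_mem_Icc hg hG) ⟨hG, rfl⟩
  have hfinite : (⋃ i ∈ Finset.Icc l (2 * l + 1), fiber i).Finite :=
    (Gamma'_finite g l).subset (Set.iUnion₂_subset fun _ _ => Set.sep_subset _ _)
  calc n' g l = (Gamma' g l).ncard := n'_natCast g l
    _ ≤ (⋃ i ∈ Finset.Icc l (2 * l + 1), fiber i).ncard := Set.ncard_le_ncard hcover hfinite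
    _ ≤ ∑ i ∈ Finset.Icc l (2 * l + 1), (fiber i).ncard := Finset.set_ncard_biUnion_le _ _
    _ ≤ ∑ i ∈ Finset.Icc l (2 * l + 1), n' ((g : ℤ) - (i : ℤ)) l :=
      Finset.sum_le_sum fun i _ => ncard_lastKunz_fiber_le hg i

theorem n'_upper_bound (g l : ℕ) (hg : 0 < g) (hl : 0 < l) :
    n' (g : ℤ) l ≤ ∑ i ∈ Finset.Icc l (2 * l + 1), n' ((g : ℤ) - (i : ℤ)) l :=
  n'_upper_bound_general g l hg
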